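/- Lower bound via the modulus of continuity under Huber contamination: for n ∈ ℕ, ε ∈ [0,1) and θ ∈ Θ, let X = Y^n and 𝒫_{θ,ε} := {P^{⊗n} : P = (1−ε)R + εQ with R ∈ ℛ_θ and Q an arbitrary probability measure on Y}. Then for every δ ∈ (0,1/2), the lower minimax (1−δ)th quantile of the loss L = g∘d over this contaminated class satisfies M_−(δ) ≥ ω(ε, ℛ_Θ, g). -/

import Mathlib

open MeasureTheory ENNReal

/-- The lower minimax `(1-δ)`th quantile. -/
noncomputable def lowerMinimaxQuantile {Θ 𝒳 : Type*} [MeasurableSpace Θ] [MeasurableSpace 𝒳]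
    (Pfam : Θ → Set (Measure 𝒳)) (L : Θ → Θ → ℝ) (δ : ℝ) : ℝ≥0∞ :=
  sInf {r : ℝ≥0∞ |
    (⨅ T : {f : 𝒳 → Θ // Measurable f}, ⨆ θ : Θ, ⨆ P ∈ Pfam θ,
      P {x | r < ENNReal.ofReal (L (T.1 x) θ)}) ≤ ENNReal.ofReal δ}

/-- Total variation distance between two measures. -/
noncomputable def tvDist {𝒴 : Type*} [MeasurableSpace 𝒴] (P Q : Measure 𝒴) : ℝ :=
  ⨆ A : {A : Set 𝒴 // MeasurableSet A}, |(P A.1).toReal - (Q A.1).toReal|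

/-- The modulus of continuity `ω(ε, ℛ_Θ, g)`, as a value in `ℝ≥0∞`. -/
noncomputable def modulusOfContinuity {Θ 𝒴 : Type*} [PseudoMetricSpace Θ] [MeasurableSpace 𝒴]
    (Rfam : Θ → Set (Measure 𝒴)) (g : ℝ → ℝ) (ε : ℝ) : ℝ≥0∞ :=
  sSup {t : ℝ≥0∞ | ∃ θ₁ θ₂ : Θ, ∃ R₁ ∈ Rfam θ₁, ∃ R₂ ∈ Rfam θ₂,
    tvDist R₁ R₂ ≤ ε / (1 - ε) ∧ t = ENNReal.ofReal (g (dist θ₁ θ₂ / 2))}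

/-!
If `TV(R₁, R₂) ≤ ε / (1 - ε)`, the Hahn decomposition of `R₁ - R₂` shows that the excess of
`R₂` over `R₁` has mass at most `ε / (1 - ε)`; after scaling by `1 - ε` it fits into an
`ε`-contamination, so there are `Q₁, Q₂` with `(1 - ε) R₁ + ε Q₁ = (1 - ε) R₂ + ε Q₂`. Then
`θ₁` and `θ₂` can produce the same sample distribution `P`. No estimate lies within
`d(θ₁, θ₂) / 2` of both, so for `r < g (d(θ₁, θ₂) / 2)` every estimator has loss above `r` with
`P`-probability at least `1 / 2 > δ` at `θ₁` or at `θ₂`.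
-/

namespace MeasureTheory

variable {α : Type*} [MeasurableSpace α]

lemma abs_toReal_sub_le_tvDist (P Q : Measure α) [IsFiniteMeasure P] [IsFiniteMeasure Q]
    {s : Set α} (hs : MeasurableSet s) :
    |(P s).toReal - (Q s).toReal| ≤ tvDist P Q := by
  refine le_ciSup (f := fun A : {A : Set α // MeasurableSet A} =>
    |(P A.1).toReal - (Q A.1).toReal|) ⟨(P .univ).toReal + (Q .univ).toReal, ?_⟩ ⟨s, hs⟩
  rintro _ ⟨A, rfl⟩
  have hP := ENNReal.toReal_mono (measure_ne_top P _) (measure_mono (Set.subset_univ A.1))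
  have hQ := ENNReal.toReal_mono (measure_ne_top Q _) (measure_mono (Set.subset_univ A.1))
  have := (P A.1).toReal_nonneg
  have := (Q A.1).toReal_nonneg
  exact abs_sub_le_iff.2 ⟨by linarith, by linarith⟩

lemma add_sub_restrict_of_le {ρ σ : Measure α} [IsFiniteMeasure ρ] {t : Set α}
    (ht : MeasurableSet t) (hρσ : ρ.restrict t ≤ σ.restrict t) :
    ρ + (σ.restrict t - ρ.restrict t) = ρ.restrict tᶜ + σ.restrict t :=
  calc ρ + (σ.restrict t - ρ.restrict t)
      = ρ.restrict tᶜ + (σ.restrict t - ρ.restrict t + ρ.restrict t) := by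
        nth_rw 1 [← Measure.restrict_add_restrict_compl (μ := ρ) ht]; ac_rfl
    _ = ρ.restrict tᶜ + σ.restrict t := by rw [Measure.sub_add_cancel_of_le hρσ]

lemma exists_add_eq_add_of_measure_univ_eq {R₁ R₂ : Measure α} [IsFiniteMeasure R₁]
    [IsFiniteMeasure R₂] (h : R₁ .univ = R₂ .univ) :
    ∃ μ ν : Measure α, R₁ + μ = R₂ + ν ∧ μ .univ = ν .univ ∧
      μ .univ ≤ ENNReal.ofReal (tvDist R₁ R₂) := by
  obtain ⟨s, hs, hle, hge⟩ := exists_isHahnDecomposition R₁ R₂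
  have hsum : R₁ + (R₂.restrict s - R₁.restrict s) = R₂ + (R₁.restrict sᶜ - R₂.restrict sᶜ) := by
    rw [add_sub_restrict_of_le hs hle, add_sub_restrict_of_le hs.compl hge, compl_compl, add_comm]
  refine ⟨_, _, hsum, ?_, ?_⟩
  · have := congrArg (· .univ) hsum
    simp only [Measure.add_apply, h] at this
    exact (ENNReal.add_right_inj (measure_ne_top R₂ _)).1 this
  · have hs₁ : R₁ s ≤ R₂ s := by simpa [hs] using Measure.le_iff'.1 hle .univ
    rw [Measure.sub_apply .univ hle, Measure.restrict_apply_univ, Measure.restrict_apply_univ,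
      ENNReal.le_ofReal_iff_toReal_le (by finiteness) ((abs_nonneg _).trans
        (abs_toReal_sub_le_tvDist R₁ R₂ hs)), ENNReal.toReal_sub_of_le hs₁ (by finiteness)]
    exact (le_abs_self _).trans ((abs_sub_comm _ _).trans_le (abs_toReal_sub_le_tvDist R₁ R₂ hs))

lemma exists_isProbabilityMeasure_smul_eq_add (ρ : Measure α) [IsProbabilityMeasure ρ]
    {m : Measure α} {b : ℝ≥0∞} (hb : b ≠ ∞) (hm : m .univ ≤ b) :
    ∃ Q : Measure α, IsProbabilityMeasure Q ∧ b • Q = m + (b - m .univ) • ρ := by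
  rcases eq_or_ne b 0 with rfl | hb₀
  · obtain rfl : m = 0 := Measure.measure_univ_eq_zero.1 (nonpos_iff_eq_zero.1 hm)
    exact ⟨ρ, inferInstance, by simp⟩
  refine ⟨b⁻¹ • (m + (b - m .univ) • ρ), ⟨?_⟩, ?_⟩
  · simp [← mul_add, add_tsub_cancel_of_le hm, ENNReal.inv_mul_cancel hb₀ hb]
  · rw [smul_smul, ENNReal.mul_inv_cancel hb₀ hb, one_smul]

lemma exists_smul_add_smul_eq {R₁ R₂ μ ν : Measure α} [IsProbabilityMeasure R₁] {a b : ℝ≥0∞}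
    (hb : b ≠ ∞) (h : R₁ + μ = R₂ + ν) (hμν : μ .univ = ν .univ) (hμ : a * μ .univ ≤ b) :
    ∃ Q₁ Q₂ : Measure α, IsProbabilityMeasure Q₁ ∧ IsProbabilityMeasure Q₂ ∧
      a • R₁ + b • Q₁ = a • R₂ + b • Q₂ := by
  obtain ⟨Q₁, hQ₁, hbQ₁⟩ := exists_isProbabilityMeasure_smul_eq_add R₁ (m := a • μ) hb (by simpa)
  obtain ⟨Q₂, hQ₂, hbQ₂⟩ := exists_isProbabilityMeasure_smul_eq_add R₁ (m := a • ν) hb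
    (by simpa [← hμν])
  refine ⟨Q₁, Q₂, hQ₁, hQ₂, ?_⟩
  simp only [hbQ₁, hbQ₂, Measure.smul_apply, smul_eq_mul, hμν, ← add_assoc, ← smul_add, h]

noncomputable def huberMixture (ε : ℝ) (R Q : Measure α) : Measure α :=
  ENNReal.ofReal (1 - ε) • R + ENNReal.ofReal ε • Q

lemma isProbabilityMeasure_huberMixture {R Q : Measure α} [IsProbabilityMeasure R]
    [IsProbabilityMeasure Q] {ε : ℝ} (hε : ε ∈ Set.Icc (0 : ℝ) 1) :
    IsProbabilityMeasure (huberMixture ε R Q) :=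
  ⟨by simp [huberMixture, ← ENNReal.ofReal_add (sub_nonneg.2 hε.2) hε.1]⟩

lemma exists_huberMixture_eq_of_tvDist_le {R₁ R₂ : Measure α} [IsProbabilityMeasure R₁]
    [IsProbabilityMeasure R₂] {ε : ℝ} (hε : ε ∈ Set.Ico (0 : ℝ) 1)
    (htv : tvDist R₁ R₂ ≤ ε / (1 - ε)) :
    ∃ Q₁ Q₂ : Measure α, IsProbabilityMeasure Q₁ ∧ IsProbabilityMeasure Q₂ ∧
      huberMixture ε R₁ Q₁ = huberMixture ε R₂ Q₂ := by
  obtain ⟨μ, ν, h, hμν, hμ⟩ :=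
    exists_add_eq_add_of_measure_univ_eq (R₁ := R₁) (R₂ := R₂) (by simp)
  refine exists_smul_add_smul_eq ENNReal.ofReal_ne_top h hμν ?_
  have hε₁ : 0 < 1 - ε := sub_pos.2 hε.2
  calc ENNReal.ofReal (1 - ε) * μ .univ
      ≤ ENNReal.ofReal (1 - ε) * ENNReal.ofReal (ε / (1 - ε)) := by
        gcongr; exact hμ.trans (ENNReal.ofReal_le_ofReal htv)
    _ = ENNReal.ofReal ε := by rw [← ENNReal.ofReal_mul hε₁.le, mul_div_cancel₀ _ hε₁.ne']

lemma inv_two_le_max_of_union_eq_univ {P : Measure α} [IsProbabilityMeasure P] {A B : Set α}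
    (h : A ∪ B = .univ) :
    2⁻¹ ≤ max (P A) (P B) := by
  rw [ENNReal.inv_le_iff_le_mul (by simp) (by simp), two_mul, ← measure_univ (μ := P), ← h]
  exact (measure_union_le A B).trans (add_le_add (le_max_left _ _) (le_max_right _ _))

end MeasureTheory

lemma dist_div_two_le_max_dist {Θ : Type*} [PseudoMetricSpace Θ] (ϑ θ₁ θ₂ : Θ) :
    dist θ₁ θ₂ / 2 ≤ max (dist ϑ θ₁) (dist ϑ θ₂) := by
  have := dist_triangle_left θ₁ θ₂ ϑ
  have := le_max_left (dist ϑ θ₁) (dist ϑ θ₂)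
  have := le_max_right (dist ϑ θ₁) (dist ϑ θ₂)
  linarith

lemma ofReal_le_lowerMinimaxQuantile_of_mem {Θ 𝒳 : Type*} [PseudoMetricSpace Θ]
    [MeasurableSpace Θ] [MeasurableSpace 𝒳] {Pfam : Θ → Set (Measure 𝒳)} {g : ℝ → ℝ}
    (hg : MonotoneOn g (Set.Ici 0)) {δ : ℝ} (hδ : δ < 1 / 2) {θ₁ θ₂ : Θ} {P : Measure 𝒳}
    [IsProbabilityMeasure P] (h₁ : P ∈ Pfam θ₁) (h₂ : P ∈ Pfam θ₂) :
    ENNReal.ofReal (g (dist θ₁ θ₂ / 2)) ≤ lowerMinimaxQuantile Pfam (fun a b ↦ g (dist a b)) δ := by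
  refine le_sInf fun r hr ↦ le_of_not_gt fun hr_lt ↦ ?_
  have hcover (ϑ : Θ) :
      r < ENNReal.ofReal (g (dist ϑ θ₁)) ∨ r < ENNReal.ofReal (g (dist ϑ θ₂)) := by
    have hle (θ : Θ) (hθ : dist θ₁ θ₂ / 2 ≤ dist ϑ θ) : r < ENNReal.ofReal (g (dist ϑ θ)) :=
      hr_lt.trans_le <| ENNReal.ofReal_le_ofReal <|
        hg (div_nonneg dist_nonneg zero_le_two) dist_nonneg hθ
    exact (le_max_iff.1 (dist_div_two_le_max_dist ϑ θ₁ θ₂)).imp (hle θ₁) (hle θ₂)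
  have hrisk (T : {f : 𝒳 → Θ // Measurable f}) :
      2⁻¹ ≤ ⨆ θ, ⨆ P ∈ Pfam θ, P {x | r < ENNReal.ofReal (g (dist (T.1 x) θ))} :=
    (inv_two_le_max_of_union_eq_univ (P := P)
      (Set.eq_univ_of_forall fun x ↦ hcover (T.1 x))).trans
      (max_le (le_iSup₂_of_le θ₁ P (le_iSup_of_le h₁ le_rfl))
        (le_iSup₂_of_le θ₂ P (le_iSup_of_le h₂ le_rfl)))
  have hδ' : ENNReal.ofReal δ < 2⁻¹ :=
    calc ENNReal.ofReal δ < ENNReal.ofReal (1 / 2) :=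
          (ENNReal.ofReal_lt_ofReal_iff (by norm_num)).2 hδ
      _ = 2⁻¹ := by rw [one_div, ENNReal.ofReal_inv_of_pos two_pos, ENNReal.ofReal_ofNat]
  exact (le_iInf hrisk).trans hr |>.not_gt hδ'

theorem lowerMinimaxQuantile_ge_modulusOfContinuity_general
    {Θ 𝒴 : Type*} [PseudoMetricSpace Θ] [MeasurableSpace Θ]
    [MeasurableSpace 𝒴]
    (Rfam : Θ → Set (Measure 𝒴)) (hRfam : ∀ θ, ∀ R ∈ Rfam θ, IsProbabilityMeasure R)
    (g : ℝ → ℝ) (hg : MonotoneOn g (Set.Ici 0))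
    (n : ℕ) (ε : ℝ) (hε : ε ∈ Set.Ico (0 : ℝ) 1)
    (δ : ℝ) (hδ : δ ∈ Set.Ioo (0 : ℝ) (1/2)) :
    modulusOfContinuity Rfam g ε ≤
      lowerMinimaxQuantile
        (fun θ => {μ : Measure (Fin n → 𝒴) | ∃ R ∈ Rfam θ, ∃ Q : Measure 𝒴,
          IsProbabilityMeasure Q ∧
          μ = Measure.pi fun _ : Fin n => ENNReal.ofReal (1 - ε) • R + ENNReal.ofReal ε • Q})
        (fun a b => g (dist a b)) δ := by
  refine sSup_le ?_
  rintro _ ⟨θ₁, θ₂, R₁, hR₁, R₂, hR₂, htv, rfl⟩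
  have := hRfam θ₁ R₁ hR₁
  have := hRfam θ₂ R₂ hR₂
  obtain ⟨Q₁, Q₂, hQ₁, hQ₂, hmix⟩ := exists_huberMixture_eq_of_tvDist_le hε htv
  have := isProbabilityMeasure_huberMixture (R := R₁) (Q := Q₁) (Set.Ico_subset_Icc_self hε)
  exact ofReal_le_lowerMinimaxQuantile_of_mem (P := Measure.pi fun _ ↦ huberMixture ε R₁ Q₁)
    hg hδ.2 ⟨R₁, hR₁, Q₁, hQ₁, rfl⟩ ⟨R₂, hR₂, Q₂, hQ₂, by rw [hmix]; rfl⟩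

/-- lower bound via the modulus of continuity under Huber contamination. -/
theorem lowerMinimaxQuantile_ge_modulusOfContinuity
    {Θ 𝒴 : Type*} [PseudoMetricSpace Θ] [Nonempty Θ] [MeasurableSpace Θ] [BorelSpace Θ]
    [MeasurableSpace 𝒴]
    (Rfam : Θ → Set (Measure 𝒴)) (hRfam : ∀ θ, ∀ R ∈ Rfam θ, IsProbabilityMeasure R)
    (g : ℝ → ℝ) (hg : MonotoneOn g (Set.Ici 0)) (hg0 : ∀ x ∈ Set.Ici (0 : ℝ), 0 ≤ g x)
    (n : ℕ) (hn : 0 < n) (ε : ℝ) (hε : ε ∈ Set.Ico (0 : ℝ) 1)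
    (δ : ℝ) (hδ : δ ∈ Set.Ioo (0 : ℝ) (1/2)) :
    modulusOfContinuity Rfam g ε ≤
      lowerMinimaxQuantile
        (fun θ => {μ : Measure (Fin n → 𝒴) | ∃ R ∈ Rfam θ, ∃ Q : Measure 𝒴,
          IsProbabilityMeasure Q ∧
          μ = Measure.pi fun _ : Fin n => ENNReal.ofReal (1 - ε) • R + ENNReal.ofReal ε • Q})
        (fun a b => g (dist a b)) δ :=
  lowerMinimaxQuantile_ge_modulusOfContinuity_general Rfam hRfam g hg n ε hε δ hδ
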